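/- In the affine braid group B(Ã_n) with n≥3, set a_3 := σ_3σ_4⋯σ_n a_{n+1} σ_n^{-1}⋯σ_4^{-1}σ_3^{-1}. Then the following identities hold: σ_1a_3σ_1 = a_3σ_1a_3; σ_3a_3σ_3 = a_3σ_3a_3; σ_ia_3 = a_3σ_i for every 4≤i≤n; and σ_3σ_2a_3σ_3 = σ_2a_3σ_3σ_2. -/

import Mathlib

/-- Relators of the affine braid group `B(Ã_n)`: generator `some i` (`i : Fin n`)
stands for `σ_{i+1}`, and `none` stands for `a_{n+1}`. -/
def braidRelsAff (n : ℕ) : Set (FreeGroup (Option (Fin n))) :=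
  { r | (∃ i j : Fin n, (i : ℕ) + 2 ≤ (j : ℕ) ∧
          r = FreeGroup.of (some i) * FreeGroup.of (some j) *
              (FreeGroup.of (some j) * FreeGroup.of (some i))⁻¹) ∨
        (∃ i j : Fin n, (j : ℕ) = (i : ℕ) + 1 ∧
          r = FreeGroup.of (some i) * FreeGroup.of (some j) * FreeGroup.of (some i) *
              (FreeGroup.of (some j) * FreeGroup.of (some i) * FreeGroup.of (some j))⁻¹) ∨
        (∃ i : Fin n, 1 ≤ (i : ℕ) ∧ (i : ℕ) + 2 ≤ n ∧
          r = FreeGroup.of (some i) * FreeGroup.of none *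
              (FreeGroup.of none * FreeGroup.of (some i))⁻¹) ∨
        (∃ i : Fin n, ((i : ℕ) = 0 ∨ (i : ℕ) + 1 = n) ∧
          r = FreeGroup.of (some i) * FreeGroup.of none * FreeGroup.of (some i) *
              (FreeGroup.of none * FreeGroup.of (some i) * FreeGroup.of none)⁻¹) }

/-- The affine (`Ã`-type) braid group `B(Ã_n)`, with generators `σ_1, …, σ_n` and `a_{n+1}`. -/
abbrev BraidAff (n : ℕ) : Type := PresentedGroup (braidRelsAff n)

/-- The word `σ_3 σ_4 ⋯ σ_n` in `B(Ã_n)`. -/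
noncomputable def conjWord (n : ℕ) : BraidAff n :=
  (((List.finRange n).drop 2).map fun i => (PresentedGroup.of (some i) : BraidAff n)).prod

/-- `a_3 = σ_3 ⋯ σ_n a_{n+1} σ_n⁻¹ ⋯ σ_3⁻¹` in `B(Ã_n)`. -/
noncomputable def a3 (n : ℕ) : BraidAff n :=
  conjWord n * PresentedGroup.of none * (conjWord n)⁻¹

/-!
Write `P = σ_3 ⋯ σ_n`, so that `a_3 = P a_{n+1} P⁻¹`, and say that `x` and `y` braid if
`x y x = y x y`. Braiding is preserved by conjugation, and the main tool is: if `s` braids with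
`t`, `s` commutes with `y` and `t` braids with `y`, then `s` braids with `t y t⁻¹`, because
`t y t⁻¹ = y⁻¹ t y` and conjugating by `y` fixes `s`. A downward induction from `σ_n` and
`a_{n+1}` then shows that `σ_k` braids with `σ_{k+1} ⋯ σ_n a_{n+1} σ_n⁻¹ ⋯ σ_{k+1}⁻¹` for
`2 ≤ k ≤ n`, which gives the relation between `σ_3` and `a_3`. The relation with `σ_1`
is the conjugate by `P` of a defining relation, `σ_i` commutes with `a_3` for `i ≥ 4` because
`σ_i P = P σ_{i-1}` and `σ_{i-1}` commutes with `a_{n+1}`, and the last identity only uses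
`σ_3 σ_2 σ_3 = σ_2 σ_3 σ_2` and that `σ_2` commutes with `σ_4 ⋯ σ_n a_{n+1} σ_n⁻¹ ⋯ σ_4⁻¹`.
-/

def BraidRel {G : Type*} [Mul G] (x y : G) : Prop :=
  x * y * x = y * x * y

namespace BraidRel

protected theorem eq {G : Type*} [Mul G] {x y : G} (h : BraidRel x y) : x * y * x = y * x * y :=
  h

theorem map {G H F : Type*} [Mul G] [Mul H] [FunLike F G H] [MulHomClass F G H] {x y : G}
    (h : BraidRel x y) (f : F) : BraidRel (f x) (f y) := by
  simp only [BraidRel, ← map_mul, h.eq]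

section Group

variable {G : Type*} [Group G] {s t y : G}

theorem conj (h : BraidRel s t) (g : G) : BraidRel (g * s * g⁻¹) (g * t * g⁻¹) := by
  simpa only [MulAut.conj_apply] using h.map (MulAut.conj g)

theorem conj_self (h : BraidRel t y) : BraidRel t (t * y * t⁻¹) := by
  simpa only [mul_inv_cancel_right] using h.conj t

theorem conj_right_of_commute {q : G} (h : BraidRel s y) (hsq : Commute s q) :
    BraidRel s (q * y * q⁻¹) := by
  simpa only [hsq.symm.mul_inv_cancel] using h.conj q

theorem conj_eq (h : BraidRel t y) : t * y * t⁻¹ = y⁻¹ * t * y := by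
  calc t * y * t⁻¹ = y⁻¹ * (y * t * y) * t⁻¹ := by group
    _ = y⁻¹ * t * y := by rw [← h.eq]; group

theorem conj_of_commute (hst : BraidRel s t) (hsy : Commute s y) (hty : BraidRel t y) :
    BraidRel s (t * y * t⁻¹) := by
  simpa only [hty.conj_eq, inv_inv] using hst.conj_right_of_commute hsy.inv_right

theorem mul_mul_conj_mul_eq (hst : BraidRel s t) (hsy : Commute s y) :
    t * s * (t * y * t⁻¹) * t = s * (t * y * t⁻¹) * t * s := by
  calc t * s * (t * y * t⁻¹) * t = t * s * t * y := by group
    _ = s * t * s * y := by rw [← hst.eq]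
    _ = s * t * y * s := by rw [mul_assoc _ s, hsy.eq, ← mul_assoc]
    _ = s * (t * y * t⁻¹) * t * s := by group

end Group

end BraidRel

namespace AffineBraid

variable {n : ℕ}

/-- The generator `σ_{i+1}`: indices are shifted down by one, as in `braidRelsAff`. -/
noncomputable def σ (i : Fin n) : BraidAff n :=
  PresentedGroup.of (some i)

noncomputable def a : BraidAff n :=
  PresentedGroup.of none

theorem commute_σ_σ {i j : Fin n} (h : (i : ℕ) + 2 ≤ j) : Commute (σ i) (σ j) :=
  PresentedGroup.mk_eq_mk_of_mul_inv_mem (Or.inl ⟨i, j, h, rfl⟩)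

theorem braidRel_σ_σ {i j : Fin n} (h : (j : ℕ) = i + 1) : BraidRel (σ i) (σ j) :=
  PresentedGroup.mk_eq_mk_of_mul_inv_mem (Or.inr (Or.inl ⟨i, j, h, rfl⟩))

theorem commute_σ_a {i : Fin n} (h₁ : 1 ≤ (i : ℕ)) (h₂ : (i : ℕ) + 2 ≤ n) :
    Commute (σ i) (a : BraidAff n) :=
  PresentedGroup.mk_eq_mk_of_mul_inv_mem (Or.inr (Or.inr (Or.inl ⟨i, h₁, h₂, rfl⟩)))

theorem braidRel_σ_a {i : Fin n} (h : (i : ℕ) = 0 ∨ (i : ℕ) + 1 = n) :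
    BraidRel (σ i) (a : BraidAff n) :=
  PresentedGroup.mk_eq_mk_of_mul_inv_mem (Or.inr (Or.inr (Or.inr ⟨i, h, rfl⟩)))

/-- `σ_{k+1} ⋯ σ_n`; thus `conjWord n = sigmaProd 2`. -/
noncomputable def sigmaProd (k : ℕ) : BraidAff n :=
  (((List.finRange n).drop k).map σ).prod

/-- `σ_{k+1} ⋯ σ_n a_{n+1} σ_n⁻¹ ⋯ σ_{k+1}⁻¹`; thus `a3 n = aConj 2`. -/
noncomputable def aConj (k : ℕ) : BraidAff n :=
  sigmaProd k * a * (sigmaProd k)⁻¹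

theorem sigmaProd_eq_σ_mul {k : ℕ} (hk : k < n) :
    sigmaProd k = σ ⟨k, hk⟩ * sigmaProd (k + 1) := by
  rw [sigmaProd, List.drop_eq_getElem_cons (by simpa using hk)]
  simp [sigmaProd]

theorem aConj_self : aConj n = (a : BraidAff n) := by
  simp [aConj, sigmaProd, List.drop_eq_nil_of_le]

theorem aConj_eq_conj {k : ℕ} (hk : k < n) :
    aConj k = σ ⟨k, hk⟩ * aConj (k + 1) * (σ ⟨k, hk⟩)⁻¹ := by
  simp only [aConj, sigmaProd_eq_σ_mul hk]
  group

theorem commute_σ_sigmaProd {i : Fin n} {k : ℕ} (h : (i : ℕ) + 2 ≤ k) :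
    Commute (σ i) (sigmaProd k) := by
  refine Commute.list_prod_right _ _ fun x hx => ?_
  obtain ⟨j, hj, rfl⟩ := List.mem_map.1 hx
  obtain ⟨m, hm, rfl⟩ := List.getElem_of_mem hj
  exact commute_σ_σ (by simp; omega)

theorem commute_σ_aConj {i : Fin n} {k : ℕ} (h₁ : 1 ≤ (i : ℕ)) (h₂ : (i : ℕ) + 2 ≤ k)
    (hk : k ≤ n) : Commute (σ i) (aConj k) :=
  have hσP := commute_σ_sigmaProd h₂
  (hσP.mul_right (commute_σ_a h₁ (by omega))).mul_right hσP.inv_right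

theorem σ_succ_mul_sigmaProd {j k : ℕ} (hkj : k ≤ j) (hj : j + 1 < n) :
    σ ⟨j + 1, hj⟩ * sigmaProd k = sigmaProd k * σ ⟨j, by omega⟩ := by
  have hj' : j < n := by omega
  induction hkj using Nat.decreasingInduction with
  | self =>
    have hb : BraidRel (σ ⟨j, hj'⟩) (σ ⟨j + 1, hj⟩) := braidRel_σ_σ rfl
    have hc : Commute (σ ⟨j, hj'⟩) (sigmaProd (j + 2)) := commute_σ_sigmaProd le_rfl
    rw [sigmaProd_eq_σ_mul hj', sigmaProd_eq_σ_mul hj]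
    calc σ ⟨j + 1, hj⟩ * (σ ⟨j, hj'⟩ * (σ ⟨j + 1, hj⟩ * sigmaProd (j + 2)))
        = σ ⟨j, hj'⟩ * σ ⟨j + 1, hj⟩ * σ ⟨j, hj'⟩ * sigmaProd (j + 2) := by
          rw [hb.eq]; group
      _ = σ ⟨j, hj'⟩ * (σ ⟨j + 1, hj⟩ * sigmaProd (j + 2)) * σ ⟨j, hj'⟩ := by
          rw [mul_assoc _ (σ _), hc.eq]; group
  | of_succ k hk ih =>
    have hc : Commute (σ ⟨k, by omega⟩) (σ ⟨j + 1, hj⟩) := commute_σ_σ (by simp; omega)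
    rw [sigmaProd_eq_σ_mul, ← mul_assoc, ← hc.eq, mul_assoc, ih, mul_assoc]

theorem commute_σ_aConj_of_lt {i : Fin n} {k : ℕ} (hki : k < i) (hi : 2 ≤ (i : ℕ)) :
    Commute (σ i) (aConj k) := by
  obtain ⟨i, hin⟩ := i
  obtain ⟨j, rfl⟩ : ∃ j, i = j + 1 := ⟨i - 1, by simp only at hi; omega⟩
  simp only at hki hi
  have hσ : σ ⟨j + 1, hin⟩ = sigmaProd k * σ ⟨j, by omega⟩ * (sigmaProd k)⁻¹ :=
    eq_mul_inv_of_mul_eq (σ_succ_mul_sigmaProd (by omega) hin)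
  rw [hσ, aConj, Commute.conj_iff]
  exact commute_σ_a (by simp; omega) (by simp; omega)

theorem braidRel_σ_aConj_succ {k : ℕ} (h₁ : 1 ≤ k) (hk : k < n) :
    BraidRel (σ ⟨k, hk⟩) (aConj (k + 1)) := by
  refine Nat.decreasingInduction'
    (P := fun k => ∀ hk : k < n, BraidRel (σ ⟨k, hk⟩) (aConj (k + 1)))
    (fun m hm hkm ih hm' => ?_) (show k ≤ n - 1 by omega) (fun hn => ?_) hk
  · rw [aConj_eq_conj (by omega)]
    exact (braidRel_σ_σ rfl).conj_of_commute
      (commute_σ_aConj (by simp; omega) (by simp) (by omega)) (ih (by omega))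
  · rw [Nat.sub_add_cancel (by omega), aConj_self]
    exact braidRel_σ_a (Or.inr (by simp; omega))

end AffineBraid

open AffineBraid in
theorem stmt_6 (n : ℕ) (hn : 3 ≤ n) :
    (PresentedGroup.of (some (⟨0, by omega⟩ : Fin n)) * a3 n *
        PresentedGroup.of (some (⟨0, by omega⟩ : Fin n)) =
      a3 n * PresentedGroup.of (some (⟨0, by omega⟩ : Fin n)) * a3 n) ∧
    (PresentedGroup.of (some (⟨2, by omega⟩ : Fin n)) * a3 n *
        PresentedGroup.of (some (⟨2, by omega⟩ : Fin n)) =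
      a3 n * PresentedGroup.of (some (⟨2, by omega⟩ : Fin n)) * a3 n) ∧
    (∀ i : Fin n, 3 ≤ (i : ℕ) →
      PresentedGroup.of (some i) * a3 n = a3 n * PresentedGroup.of (some i)) ∧
    (PresentedGroup.of (some (⟨2, by omega⟩ : Fin n)) *
        PresentedGroup.of (some (⟨1, by omega⟩ : Fin n)) * a3 n *
        PresentedGroup.of (some (⟨2, by omega⟩ : Fin n)) =
      PresentedGroup.of (some (⟨1, by omega⟩ : Fin n)) * a3 n *
        PresentedGroup.of (some (⟨2, by omega⟩ : Fin n)) *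
        PresentedGroup.of (some (⟨1, by omega⟩ : Fin n))) := by
  have ha3 : a3 n = σ ⟨2, by omega⟩ * aConj 3 * (σ ⟨2, by omega⟩)⁻¹ := aConj_eq_conj _
  refine ⟨?_, ?_, fun i hi => ?_, ?_⟩
  · exact (braidRel_σ_a (Or.inl rfl)).conj_right_of_commute (commute_σ_sigmaProd le_rfl)
  · rw [ha3]
    exact (braidRel_σ_aConj_succ (by simp) _).conj_self
  · exact (commute_σ_aConj_of_lt (k := 2) (by omega) (by omega)).eq
  · rw [ha3]
    exact (braidRel_σ_σ rfl).mul_mul_conj_mul_eq (commute_σ_aConj le_rfl le_rfl (by omega))
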